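/- arXiv:2001.02345 — 4 statements merged into one kernel-verified Lean document; each statement's English description precedes it below -/
import Mathlib

section
/- Let A, B, C ∈ M_n(M_k) be positive semidefinite block matrices. Then det_1(A+B+C) + det_1 C ≥ det_1(A+C) + det_1(B+C) in the Loewner order on M_k. -/
set_option maxRecDepth 8000
set_option maxHeartbeats 1000000
open Finset Matrix


open ComplexOrder

/-- The first partial determinant `det₁ H ∈ M_k` of a block matrix
`H ∈ M_n(M_k)`: its `(l,m)` entry is `det G_{lm}`, where `G_{lm} ∈ M_n` has
`(i,j)` entry `H((i,l),(j,m))`. -/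
noncomputable def det1 {n k : ℕ}
    (H : Matrix (Fin n × Fin k) (Fin n × Fin k) ℂ) :
    Matrix (Fin k) (Fin k) ℂ :=
  Matrix.of fun l m => (Matrix.of fun i j : Fin n => H (i, l) (j, m)).det

private lemma det_apply_col {n : ℕ} (M : Matrix (Fin n) (Fin n) ℂ) :
    M.det = ∑ σ : Equiv.Perm (Fin n), ((Equiv.Perm.sign σ : ℤ) : ℂ) * ∏ i, M i (σ i) := by
  conv_lhs => rw [← Matrix.det_transpose M, Matrix.det_apply']
  rfl

private lemma sign_helper {n : ℕ} (τ σ : Equiv.Perm (Fin n)) :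
    ((Equiv.Perm.sign τ⁻¹ : ℤ) : ℂ) * ((Equiv.Perm.sign (σ * τ⁻¹) : ℤ) : ℂ)
      = ((Equiv.Perm.sign σ : ℤ) : ℂ) := by
  rw [← Int.cast_mul, ← Units.val_mul, Equiv.Perm.sign_mul, Equiv.Perm.sign_inv]
  congr 2
  rw [mul_comm (Equiv.Perm.sign σ), ← mul_assoc, Int.units_mul_self, one_mul]

private lemma core_nonneg {n k : ℕ} (N : Fin 3 → Matrix (Fin n × Fin k) (Fin n × Fin k) ℂ)
    (hN : ∀ t, (N t).PosSemidef) (x : Fin k → ℂ) (φ : Fin n → Fin 3) :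
    0 ≤ ∑ τ : Equiv.Perm (Fin n), ∑ l, ∑ m, (starRingEnd ℂ) (x l) * x m *
        (Matrix.of fun i j : Fin n => N (φ (τ i)) (i, l) (j, m)).det := by
  classical
  have hV : ∀ t, ∃ B : Matrix (Fin n × Fin k) (Fin n × Fin k) ℂ, N t = Bᴴ * B :=
    fun t => by
      open scoped MatrixOrder Matrix.Norms.L2Operator in
      obtain ⟨B, hB⟩ := CStarAlgebra.nonneg_iff_eq_star_mul_self.mp (hN t).nonneg
      exact ⟨B, hB⟩
  choose V hV using hV
  have hentry : ∀ t p q, N t p q = ∑ r, (starRingEnd ℂ) (V t r p) * V t r q := by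
    intro t p q
    rw [hV t, Matrix.mul_apply]
    simp only [Matrix.conjTranspose_apply, starRingEnd_apply]
  set E : (Fin n → Fin n × Fin k) → ℂ := fun s => ∑ m, x m * ∑ ρ : Equiv.Perm (Fin n),
      ((Equiv.Perm.sign ρ : ℤ) : ℂ) * ∏ j, V (φ j) (s j) (ρ j, m) with hE
  have main : (∑ τ : Equiv.Perm (Fin n), ∑ l, ∑ m, (starRingEnd ℂ) (x l) * x m *
        (Matrix.of fun i j : Fin n => N (φ (τ i)) (i, l) (j, m)).det)
      = ∑ s : Fin n → Fin n × Fin k, (starRingEnd ℂ) (E s) * E s := by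
    have step1 : (∑ τ : Equiv.Perm (Fin n), ∑ l, ∑ m, (starRingEnd ℂ) (x l) * x m *
          (Matrix.of fun i j : Fin n => N (φ (τ i)) (i, l) (j, m)).det)
        = ∑ τ : Equiv.Perm (Fin n), ∑ l, ∑ m, ∑ σ : Equiv.Perm (Fin n),
            ∑ r : Fin n → Fin n × Fin k,
            (starRingEnd ℂ) (x l) * x m * (((Equiv.Perm.sign σ : ℤ) : ℂ) *
              ∏ i, ((starRingEnd ℂ) (V (φ (τ i)) (r i) (i, l)) * V (φ (τ i)) (r i) (σ i, m))) := by
      simp only [det_apply_col, Matrix.of_apply]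
      simp_rw [hentry]
      simp_rw [Finset.prod_univ_sum]
      simp only [Fintype.piFinset_univ]
      simp only [Finset.mul_sum]
    have step3 : ∀ s : Fin n → Fin n × Fin k, (starRingEnd ℂ) (E s) * E s
        = ∑ m, ∑ ρ : Equiv.Perm (Fin n), ∑ l, ∑ π : Equiv.Perm (Fin n),
            (starRingEnd ℂ) (x l) * x m * (((Equiv.Perm.sign π : ℤ) : ℂ) *
              (((Equiv.Perm.sign ρ : ℤ) : ℂ) *
              ((∏ j, (starRingEnd ℂ) (V (φ j) (s j) (π j, l))) *
                ∏ j, V (φ j) (s j) (ρ j, m)))) := by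
      intro s
      simp only [hE, map_sum, _root_.map_mul, map_prod, map_intCast]
      simp only [Finset.sum_mul, Finset.mul_sum]
      refine Finset.sum_congr rfl fun m _ => Finset.sum_congr rfl fun ρ _ =>
        Finset.sum_congr rfl fun l _ => Finset.sum_congr rfl fun π _ => ?_
      ring
    -- the reindexing bijection
    let e : (Equiv.Perm (Fin n) × Fin k × Fin k × Equiv.Perm (Fin n) × (Fin n → Fin n × Fin k)) ≃
        ((Fin n → Fin n × Fin k) × Fin k × Equiv.Perm (Fin n) × Fin k × Equiv.Perm (Fin n)) :=
      { toFun := fun z => (z.2.2.2.2 ∘ ⇑z.1⁻¹, z.2.2.1, z.2.2.2.1 * z.1⁻¹, z.2.1, z.1⁻¹)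
        invFun := fun w => (w.2.2.2.2⁻¹, w.2.2.2.1, w.2.1, w.2.2.1 * w.2.2.2.2⁻¹,
          w.1 ∘ ⇑w.2.2.2.2⁻¹)
        left_inv := by
          rintro ⟨τ, l, m, σ, r⟩
          simp only [inv_inv]
          refine Prod.ext ?_ (Prod.ext rfl (Prod.ext rfl (Prod.ext ?_ ?_)))
          · rfl
          · group
          · funext i; simp
        right_inv := by
          rintro ⟨s, m, ρ, l, π⟩
          simp only [inv_inv]
          refine Prod.ext ?_ (Prod.ext rfl (Prod.ext ?_ (Prod.ext rfl ?_)))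
          · funext i; simp
          · group
          · rfl }
    have hpt : ∀ z : Equiv.Perm (Fin n) × Fin k × Fin k × Equiv.Perm (Fin n) ×
        (Fin n → Fin n × Fin k),
        (starRingEnd ℂ) (x z.2.1) * x z.2.2.1 * (((Equiv.Perm.sign z.2.2.2.1 : ℤ) : ℂ) *
          ∏ i, ((starRingEnd ℂ) (V (φ (z.1 i)) (z.2.2.2.2 i) (i, z.2.1)) *
            V (φ (z.1 i)) (z.2.2.2.2 i) (z.2.2.2.1 i, z.2.2.1)))
        = (starRingEnd ℂ) (x (e z).2.2.2.1) * x (e z).2.1 *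
            (((Equiv.Perm.sign (e z).2.2.2.2 : ℤ) : ℂ) *
              (((Equiv.Perm.sign (e z).2.2.1 : ℤ) : ℂ) *
              ((∏ j, (starRingEnd ℂ) (V (φ j) ((e z).1 j) ((e z).2.2.2.2 j, (e z).2.2.2.1))) *
                ∏ j, V (φ j) ((e z).1 j) ((e z).2.2.1 j, (e z).2.1)))) := by
      rintro ⟨τ, l, m, σ, r⟩
      show (starRingEnd ℂ) (x l) * x m * (((Equiv.Perm.sign σ : ℤ) : ℂ) *
          ∏ i, ((starRingEnd ℂ) (V (φ (τ i)) (r i) (i, l)) * V (φ (τ i)) (r i) (σ i, m)))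
        = (starRingEnd ℂ) (x l) * x m * (((Equiv.Perm.sign τ⁻¹ : ℤ) : ℂ) *
            (((Equiv.Perm.sign (σ * τ⁻¹) : ℤ) : ℂ) *
              ((∏ j, (starRingEnd ℂ) (V (φ j) ((r ∘ ⇑τ⁻¹) j) ((τ⁻¹ : Equiv.Perm (Fin n)) j, l))) *
                ∏ j, V (φ j) ((r ∘ ⇑τ⁻¹) j) ((σ * τ⁻¹) j, m))))
      have h1 : (∏ j, (starRingEnd ℂ) (V (φ j) ((r ∘ ⇑τ⁻¹) j) ((τ⁻¹ : Equiv.Perm (Fin n)) j, l)))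
          = ∏ i, (starRingEnd ℂ) (V (φ (τ i)) (r i) (i, l)) := by
        rw [← Equiv.prod_comp τ
          (fun j => (starRingEnd ℂ) (V (φ j) ((r ∘ ⇑τ⁻¹) j) ((τ⁻¹ : Equiv.Perm (Fin n)) j, l)))]
        refine Finset.prod_congr rfl fun i _ => ?_
        simp [Function.comp]
      have h2 : (∏ j, V (φ j) ((r ∘ ⇑τ⁻¹) j) ((σ * τ⁻¹) j, m))
          = ∏ i, V (φ (τ i)) (r i) (σ i, m) := by
        rw [← Equiv.prod_comp τ (fun j => V (φ j) ((r ∘ ⇑τ⁻¹) j) ((σ * τ⁻¹) j, m))]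
        refine Finset.prod_congr rfl fun i _ => ?_
        simp [Function.comp, Equiv.Perm.mul_apply]
      rw [h1, h2, ← Finset.prod_mul_distrib]
      rw [show (((Equiv.Perm.sign τ⁻¹ : ℤ) : ℂ) *
          (((Equiv.Perm.sign (σ * τ⁻¹) : ℤ) : ℂ) * (((∏ i, (starRingEnd ℂ) (V (φ (τ i)) (r i) (i, l)) * V (φ (τ i)) (r i) (σ i, m))))))
        = (((Equiv.Perm.sign τ⁻¹ : ℤ) : ℂ) * ((Equiv.Perm.sign (σ * τ⁻¹) : ℤ) : ℂ)) * (∏ i, (starRingEnd ℂ) (V (φ (τ i)) (r i) (i, l)) * V (φ (τ i)) (r i) (σ i, m)) from by ring,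
        sign_helper]
    have step2 : (∑ τ : Equiv.Perm (Fin n), ∑ l, ∑ m, ∑ σ : Equiv.Perm (Fin n),
            ∑ r : Fin n → Fin n × Fin k,
            (starRingEnd ℂ) (x l) * x m * (((Equiv.Perm.sign σ : ℤ) : ℂ) *
              ∏ i, ((starRingEnd ℂ) (V (φ (τ i)) (r i) (i, l)) * V (φ (τ i)) (r i) (σ i, m))))
        = ∑ s : Fin n → Fin n × Fin k, ∑ m, ∑ ρ : Equiv.Perm (Fin n), ∑ l,
            ∑ π : Equiv.Perm (Fin n),
            (starRingEnd ℂ) (x l) * x m * (((Equiv.Perm.sign π : ℤ) : ℂ) *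
              (((Equiv.Perm.sign ρ : ℤ) : ℂ) *
              ((∏ j, (starRingEnd ℂ) (V (φ j) (s j) (π j, l))) *
                ∏ j, V (φ j) (s j) (ρ j, m)))) := by
      calc (∑ τ : Equiv.Perm (Fin n), ∑ l, ∑ m, ∑ σ : Equiv.Perm (Fin n),
            ∑ r : Fin n → Fin n × Fin k,
            (starRingEnd ℂ) (x l) * x m * (((Equiv.Perm.sign σ : ℤ) : ℂ) *
              ∏ i, ((starRingEnd ℂ) (V (φ (τ i)) (r i) (i, l)) * V (φ (τ i)) (r i) (σ i, m))))
          = ∑ z : Equiv.Perm (Fin n) × Fin k × Fin k × Equiv.Perm (Fin n) ×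
              (Fin n → Fin n × Fin k),
            (starRingEnd ℂ) (x z.2.1) * x z.2.2.1 * (((Equiv.Perm.sign z.2.2.2.1 : ℤ) : ℂ) *
              ∏ i, ((starRingEnd ℂ) (V (φ (z.1 i)) (z.2.2.2.2 i) (i, z.2.1)) *
                V (φ (z.1 i)) (z.2.2.2.2 i) (z.2.2.2.1 i, z.2.2.1))) := by
            simp only [Fintype.sum_prod_type]
        _ = ∑ w : (Fin n → Fin n × Fin k) × Fin k × Equiv.Perm (Fin n) × Fin k ×
              Equiv.Perm (Fin n),
            (starRingEnd ℂ) (x w.2.2.2.1) * x w.2.1 * (((Equiv.Perm.sign w.2.2.2.2 : ℤ) : ℂ) *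
              (((Equiv.Perm.sign w.2.2.1 : ℤ) : ℂ) *
              ((∏ j, (starRingEnd ℂ) (V (φ j) (w.1 j) (w.2.2.2.2 j, w.2.2.2.1))) *
                ∏ j, V (φ j) (w.1 j) (w.2.2.1 j, w.2.1)))) :=
            Fintype.sum_equiv e _ _ hpt
        _ = _ := by simp only [Fintype.sum_prod_type]
    rw [step1, step2]
    exact Finset.sum_congr rfl fun s _ => (step3 s).symm
  rw [main]
  refine Finset.sum_nonneg fun s _ => ?_
  rw [starRingEnd_apply]
  exact star_mul_self_nonneg (E s)

private lemma det_sum_expand {n k : ℕ} (N : Fin 3 → Matrix (Fin n × Fin k) (Fin n × Fin k) ℂ)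
    (S : Finset (Fin 3)) (l m : Fin k) :
    (Matrix.of fun i j : Fin n => ∑ t ∈ S, N t (i, l) (j, m)).det
      = ∑ φ ∈ Fintype.piFinset (fun _ : Fin n => S),
          (Matrix.of fun i j : Fin n => N (φ i) (i, l) (j, m)).det := by
  have h := (Matrix.detRowAlternating : (Fin n → ℂ) [⋀^Fin n]→ₗ[ℂ] ℂ).toMultilinearMap.map_sum_finset
      (fun i t => (fun j => N t (i, l) (j, m))) (fun _ => S)
  have e1 : (Matrix.of fun i j : Fin n => ∑ t ∈ S, N t (i, l) (j, m))
      = (fun i => ∑ t ∈ S, (fun j => N t (i, l) (j, m))) := by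
    ext i j
    simp
  calc (Matrix.of fun i j : Fin n => ∑ t ∈ S, N t (i, l) (j, m)).det
      = Matrix.detRowAlternating (fun i => ∑ t ∈ S, (fun j => N t (i, l) (j, m))) := by
        rw [← e1]
        rfl
    _ = _ := by rw [← AlternatingMap.coe_multilinearMap, h]; rfl

private lemma det1_isHermitian {n k : ℕ} {H : Matrix (Fin n × Fin k) (Fin n × Fin k) ℂ}
    (h : H.IsHermitian) : (det1 H).IsHermitian := by
  show (det1 H)ᴴ = det1 H
  ext l m
  simp only [Matrix.conjTranspose_apply, det1, Matrix.of_apply]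
  rw [← Matrix.det_conjTranspose]
  congr 1
  ext i j
  simp only [Matrix.conjTranspose_apply, Matrix.of_apply]
  rw [← h.apply]
  exact star_star _




/-- For positive semidefinite `A, B, C ∈ M_n(M_k)`,
`det₁(A+B+C) + det₁ C ≥ det₁(A+C) + det₁(B+C)` in the Loewner order on
`M_k`. -/
theorem det1_superadditive_three {n k : ℕ}
    (A B C : Matrix (Fin n × Fin k) (Fin n × Fin k) ℂ)
    (hA : A.PosSemidef) (hB : B.PosSemidef) (hC : C.PosSemidef) :
    (det1 (A + B + C) + det1 C - (det1 (A + C) + det1 (B + C))).PosSemidef := by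
  classical
  have hABC : (A + B + C).PosSemidef := (hA.add hB).add hC
  have hAC : (A + C).PosSemidef := hA.add hC
  have hBC : (B + C).PosSemidef := hB.add hC
  refine Matrix.PosSemidef.of_dotProduct_mulVec_nonneg ?_ ?_
  · exact ((det1_isHermitian hABC.1).add (det1_isHermitian hC.1)).sub
      ((det1_isHermitian hAC.1).add (det1_isHermitian hBC.1))
  intro x
  set N : Fin 3 → Matrix (Fin n × Fin k) (Fin n × Fin k) ℂ := ![A, B, C] with hNdef
  have hN : ∀ t, (N t).PosSemidef := by
    intro t
    fin_cases t <;> simpa [hNdef]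
  set P02 : Finset (Fin n → Fin 3) :=
    Fintype.piFinset (fun _ => ({0, 2} : Finset (Fin 3))) with hP02
  set P12 : Finset (Fin n → Fin 3) :=
    Fintype.piFinset (fun _ => ({1, 2} : Finset (Fin 3))) with hP12
  set Good : Finset (Fin n → Fin 3) := Finset.univ \ (P02 ∪ P12) with hGood
  have entry : ∀ l m : Fin k,
      (det1 (A + B + C) + det1 C - (det1 (A + C) + det1 (B + C))) l m
        = ∑ φ ∈ Good, (Matrix.of fun i j : Fin n => N (φ i) (i, l) (j, m)).det := by
    intro l m
    have h1 : det1 (A + B + C) l m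
        = ∑ φ : Fin n → Fin 3, (Matrix.of fun i j : Fin n => N (φ i) (i, l) (j, m)).det := by
      have e : (Matrix.of fun i j : Fin n => (A + B + C) (i, l) (j, m))
          = (Matrix.of fun i j : Fin n =>
              ∑ t ∈ (Finset.univ : Finset (Fin 3)), N t (i, l) (j, m)) := by
        ext i j
        simp [hNdef, Fin.sum_univ_three, Matrix.add_apply]
      rw [show det1 (A + B + C) l m
          = (Matrix.of fun i j : Fin n => (A + B + C) (i, l) (j, m)).det from rfl,
        e, det_sum_expand, Fintype.piFinset_univ]
    have h2 : det1 (A + C) l m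
        = ∑ φ ∈ P02, (Matrix.of fun i j : Fin n => N (φ i) (i, l) (j, m)).det := by
      have e : (Matrix.of fun i j : Fin n => (A + C) (i, l) (j, m))
          = (Matrix.of fun i j : Fin n =>
              ∑ t ∈ ({0, 2} : Finset (Fin 3)), N t (i, l) (j, m)) := by
        ext i j
        simp only [Matrix.of_apply]
        rw [Finset.sum_pair (by decide : (0 : Fin 3) ≠ 2)]
        simp [hNdef, Matrix.add_apply]
      rw [show det1 (A + C) l m
          = (Matrix.of fun i j : Fin n => (A + C) (i, l) (j, m)).det from rfl,
        e, det_sum_expand, hP02]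
    have h3 : det1 (B + C) l m
        = ∑ φ ∈ P12, (Matrix.of fun i j : Fin n => N (φ i) (i, l) (j, m)).det := by
      have e : (Matrix.of fun i j : Fin n => (B + C) (i, l) (j, m))
          = (Matrix.of fun i j : Fin n =>
              ∑ t ∈ ({1, 2} : Finset (Fin 3)), N t (i, l) (j, m)) := by
        ext i j
        simp only [Matrix.of_apply]
        rw [Finset.sum_pair (by decide : (1 : Fin 3) ≠ 2)]
        simp [hNdef, Matrix.add_apply]
      rw [show det1 (B + C) l m
          = (Matrix.of fun i j : Fin n => (B + C) (i, l) (j, m)).det from rfl,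
        e, det_sum_expand, hP12]
    have h4 : det1 C l m
        = (Matrix.of fun i j : Fin n => N ((fun _ : Fin n => (2 : Fin 3)) i) (i, l) (j, m)).det := by
      rfl
    have hint : P02 ∩ P12 = {fun _ : Fin n => (2 : Fin 3)} := by
      have key3 : ∀ a : Fin 3,
          (a ∈ ({0, 2} : Finset (Fin 3)) ∧ a ∈ ({1, 2} : Finset (Fin 3))) ↔ a = 2 := by decide
      ext ψ
      simp only [hP02, hP12, Finset.mem_inter, Fintype.mem_piFinset, ← forall_and, key3,
        Finset.mem_singleton, funext_iff]
    have hsd : ∑ φ ∈ Good, (Matrix.of fun i j : Fin n => N (φ i) (i, l) (j, m)).det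
        = (∑ φ : Fin n → Fin 3, (Matrix.of fun i j : Fin n => N (φ i) (i, l) (j, m)).det)
          - ∑ φ ∈ P02 ∪ P12, (Matrix.of fun i j : Fin n => N (φ i) (i, l) (j, m)).det := by
      rw [hGood]
      exact Finset.sum_sdiff_eq_sub (Finset.subset_univ _)
    have hui : (∑ φ ∈ P02 ∪ P12, (Matrix.of fun i j : Fin n => N (φ i) (i, l) (j, m)).det)
          + ∑ φ ∈ P02 ∩ P12, (Matrix.of fun i j : Fin n => N (φ i) (i, l) (j, m)).det
        = (∑ φ ∈ P02, (Matrix.of fun i j : Fin n => N (φ i) (i, l) (j, m)).det)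
          + ∑ φ ∈ P12, (Matrix.of fun i j : Fin n => N (φ i) (i, l) (j, m)).det :=
      Finset.sum_union_inter
    rw [hint, Finset.sum_singleton] at hui
    simp only [Matrix.sub_apply, Matrix.add_apply]
    rw [h1, h2, h3, h4, hsd]
    linear_combination hui
  have hquad : star x ⬝ᵥ ((det1 (A + B + C) + det1 C - (det1 (A + C) + det1 (B + C))) *ᵥ x)
      = ∑ φ ∈ Good, ∑ l, ∑ m, (starRingEnd ℂ) (x l) * x m *
          (Matrix.of fun i j : Fin n => N (φ i) (i, l) (j, m)).det := by
    simp only [dotProduct, Matrix.mulVec, Pi.star_apply]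
    simp_rw [entry]
    simp only [Finset.sum_mul, Finset.mul_sum]
    rw [Finset.sum_comm]
    refine Eq.trans (Finset.sum_congr rfl fun l _ => Finset.sum_comm) ?_
    rw [Finset.sum_comm]
    refine Finset.sum_congr rfl fun φ _ => Eq.trans Finset.sum_comm ?_
    refine Finset.sum_congr rfl fun l _ => Finset.sum_congr rfl fun m _ => ?_
    rw [Complex.star_def]
    ring
  rw [hquad]
  -- invariance of Good under precomposition with a permutation
  have hmem : ∀ (S : Finset (Fin 3)) (τ : Equiv.Perm (Fin n)) (φ : Fin n → Fin 3),
      ((fun i => φ (τ i)) ∈ Fintype.piFinset (fun _ : Fin n => S))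
        ↔ φ ∈ Fintype.piFinset (fun _ : Fin n => S) := by
    intro S τ φ
    simp only [Fintype.mem_piFinset]
    exact ⟨fun h i => by simpa using h (τ⁻¹ i), fun h i => h _⟩
  have hinv : ∀ τ : Equiv.Perm (Fin n),
      (∑ φ ∈ Good, ∑ l, ∑ m, (starRingEnd ℂ) (x l) * x m *
          (Matrix.of fun i j : Fin n => N (φ i) (i, l) (j, m)).det)
        = ∑ φ ∈ Good, ∑ l, ∑ m, (starRingEnd ℂ) (x l) * x m *
          (Matrix.of fun i j : Fin n => N (φ (τ i)) (i, l) (j, m)).det := by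
    intro τ
    refine Finset.sum_equiv (Equiv.arrowCongr (τ : Fin n ≃ Fin n) (Equiv.refl (Fin 3))) ?_ ?_
    · intro φ
      have e1 : (Equiv.arrowCongr (τ : Fin n ≃ Fin n) (Equiv.refl (Fin 3))) φ
          = fun i => φ (τ⁻¹ i) := by
        funext i
        simp [Equiv.arrowCongr, Equiv.Perm.inv_def]
      rw [hGood]
      simp only [Finset.mem_sdiff, Finset.mem_union, Finset.mem_univ, true_and, e1, hP02, hP12,
        hmem _ τ⁻¹ φ]
    · intro φ _
      refine Finset.sum_congr rfl fun l _ => Finset.sum_congr rfl fun m _ => ?_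
      congr 2
      ext i j
      simp [Equiv.arrowCongr]
  have hpos : (0:ℂ) ≤ ∑ τ : Equiv.Perm (Fin n), ∑ φ ∈ Good, ∑ l, ∑ m,
      (starRingEnd ℂ) (x l) * x m *
        (Matrix.of fun i j : Fin n => N (φ i) (i, l) (j, m)).det := by
    calc (0:ℂ) ≤ ∑ φ ∈ Good, ∑ τ : Equiv.Perm (Fin n), ∑ l, ∑ m,
        (starRingEnd ℂ) (x l) * x m *
          (Matrix.of fun i j : Fin n => N (φ (τ i)) (i, l) (j, m)).det :=
          Finset.sum_nonneg fun φ _ => core_nonneg N hN x φ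
      _ = ∑ τ : Equiv.Perm (Fin n), ∑ φ ∈ Good, ∑ l, ∑ m,
          (starRingEnd ℂ) (x l) * x m *
            (Matrix.of fun i j : Fin n => N (φ (τ i)) (i, l) (j, m)).det := Finset.sum_comm
      _ = _ := Finset.sum_congr rfl fun τ _ => (hinv τ).symm
  rw [Finset.sum_const, Finset.card_univ, nsmul_eq_mul] at hpos
  have hc : 0 < Fintype.card (Equiv.Perm (Fin n)) := Fintype.card_pos
  have hcC : ((Fintype.card (Equiv.Perm (Fin n)) : ℂ)) ≠ 0 := Nat.cast_ne_zero.mpr hc.ne'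
  have hinvpos : (0:ℂ) ≤ ((Fintype.card (Equiv.Perm (Fin n)) : ℂ))⁻¹ := by
    have e2 : (((Fintype.card (Equiv.Perm (Fin n)) : ℝ)⁻¹ : ℝ) : ℂ)
        = ((Fintype.card (Equiv.Perm (Fin n)) : ℂ))⁻¹ := by
      push_cast
      ring
    rw [← e2]
    rw [Complex.le_def]
    constructor
    · simp only [Complex.zero_re, Complex.ofReal_re]
      positivity
    · simp [Complex.ofReal_im]
  have hfin := mul_nonneg hinvpos hpos
  rwa [← mul_assoc, inv_mul_cancel₀ hcC, one_mul] at hfin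
end

section
/- Let A, B, C ∈ M_n(M_k) be positive semidefinite block matrices with blocks A_{ij}, B_{ij}, C_{ij} ∈ M_k. Then det_2(A+B+C) + det_2 C ≥ det_2(A+C) + det_2(B+C) in the Loewner order on M_n. -/
open ComplexOrder

/-- The second partial determinant `det₂ H = [det H_{ij}]_{i,j=1}^n ∈ M_n` of a
block matrix `H ∈ M_n(M_k)`, where `(H_{ij})_{lm} = H((i,l),(j,m))`. -/
noncomputable def det2 {n k : ℕ}
    (H : Matrix (Fin n × Fin k) (Fin n × Fin k) ℂ) :
    Matrix (Fin n) (Fin n) ℂ :=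
  Matrix.of fun i j => (Matrix.of fun l m : Fin k => H (i, l) (j, m)).det

namespace Det2Aux

open Matrix

variable {n k : ℕ}

/-- The block of the family-selected matrix: rows chosen according to `f`. -/
noncomputable def blockF (G : Fin 3 → Matrix (Fin n × Fin k) (Fin n × Fin k) ℂ)
    (f : Fin k → Fin 3) (i j : Fin n) : Matrix (Fin k) (Fin k) ℂ :=
  Matrix.of fun l m => G (f l) (i, l) (j, m)

/-- Columns version of the Leibniz formula. -/
lemma det_col (M : Matrix (Fin k) (Fin k) ℂ) :
    M.det = ∑ σ : Equiv.Perm (Fin k), ((Equiv.Perm.sign σ : ℤ) : ℂ) * ∏ l, M l (σ l) := by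
  rw [← Matrix.det_transpose, Matrix.det_apply']
  rfl

/-- Multilinear expansion of a block determinant of a sum of three matrices. -/
lemma det2_sum_expand (G : Fin 3 → Matrix (Fin n × Fin k) (Fin n × Fin k) ℂ) (i j : Fin n) :
    det2 (∑ t, G t) i j = ∑ f : Fin k → Fin 3, (blockF G f i j).det := by
  have h := (Matrix.detRowAlternating (R := ℂ) (n := Fin k)).toMultilinearMap.map_sum
      (g := fun (l : Fin k) (t : Fin 3) => fun m => G t (i, l) (j, m))
  have e : (fun (l : Fin k) => ∑ t : Fin 3, fun m => G t (i, l) (j, m))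
      = fun l => fun m => (∑ t, G t) (i, l) (j, m) := by
    funext l m
    simp [Matrix.sum_apply]
  rw [e] at h
  exact h

/-- The "Gram vector" scalar. -/
noncomputable def T (G : Fin 3 → Matrix (Fin n × Fin k) (Fin n × Fin k) ℂ)
    (f : Fin k → Fin 3) (ρ : Fin k → Fin n × Fin k) (i : Fin n) : ℂ :=
  (Matrix.of fun l m : Fin k => G (f l) (ρ l) (i, m)).det

lemma inner_sum (F G : Fin 3 → Matrix (Fin n × Fin k) (Fin n × Fin k) ℂ)
    (hFG : ∀ t, F t = (G t)ᴴ * G t) (f : Fin k → Fin 3) (i j : Fin n) :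
    ∑ ρ : Fin k → Fin n × Fin k, star (T G f ρ i) * T G f ρ j
      = ∑ σ : Equiv.Perm (Fin k), ∑ τ : Equiv.Perm (Fin k),
          ((Equiv.Perm.sign σ : ℤ) : ℂ) * ((Equiv.Perm.sign τ : ℤ) : ℂ)
            * ∏ l, F (f l) (i, σ l) (j, τ l) := by
  have hstar : ∀ ρ, star (T G f ρ i)
      = ∑ σ : Equiv.Perm (Fin k), ((Equiv.Perm.sign σ : ℤ) : ℂ)
          * ∏ l, star (G (f l) (ρ l) (i, σ l)) := by
    intro ρ
    have h := congrArg star (det_col (Matrix.of fun l m : Fin k => G (f l) (ρ l) (i, m)))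
    simp only [Matrix.of_apply] at h
    rw [T, h, star_sum]
    refine Finset.sum_congr rfl fun σ _ => ?_
    rw [star_mul', star_prod, star_intCast]
  have hT : ∀ ρ, T G f ρ j
      = ∑ τ : Equiv.Perm (Fin k), ((Equiv.Perm.sign τ : ℤ) : ℂ)
          * ∏ l, G (f l) (ρ l) (j, τ l) := fun ρ => det_col _
  calc ∑ ρ : Fin k → Fin n × Fin k, star (T G f ρ i) * T G f ρ j
      = ∑ ρ : Fin k → Fin n × Fin k, ∑ σ : Equiv.Perm (Fin k), ∑ τ : Equiv.Perm (Fin k),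
          ((Equiv.Perm.sign σ : ℤ) : ℂ) * ((Equiv.Perm.sign τ : ℤ) : ℂ)
            * ∏ l, (star (G (f l) (ρ l) (i, σ l)) * G (f l) (ρ l) (j, τ l)) := by
        refine Finset.sum_congr rfl fun ρ _ => ?_
        rw [hstar, hT, Finset.sum_mul_sum]
        refine Finset.sum_congr rfl fun σ _ => Finset.sum_congr rfl fun τ _ => ?_
        rw [Finset.prod_mul_distrib]; ring
    _ = ∑ σ : Equiv.Perm (Fin k), ∑ τ : Equiv.Perm (Fin k),
          ((Equiv.Perm.sign σ : ℤ) : ℂ) * ((Equiv.Perm.sign τ : ℤ) : ℂ)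
            * ∑ ρ : Fin k → Fin n × Fin k,
                ∏ l, (star (G (f l) (ρ l) (i, σ l)) * G (f l) (ρ l) (j, τ l)) := by
        rw [Finset.sum_comm]
        refine Finset.sum_congr rfl fun σ _ => ?_
        rw [Finset.sum_comm]
        refine Finset.sum_congr rfl fun τ _ => ?_
        rw [Finset.mul_sum]
    _ = ∑ σ : Equiv.Perm (Fin k), ∑ τ : Equiv.Perm (Fin k),
          ((Equiv.Perm.sign σ : ℤ) : ℂ) * ((Equiv.Perm.sign τ : ℤ) : ℂ)
            * ∏ l, F (f l) (i, σ l) (j, τ l) := by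
        refine Finset.sum_congr rfl fun σ _ => Finset.sum_congr rfl fun τ _ => ?_
        congr 1
        have hps := Fintype.prod_sum (R := ℂ) (ι := Fin k) (κ := fun _ => Fin n × Fin k)
          (fun l r => star (G (f l) r (i, σ l)) * G (f l) r (j, τ l))
        rw [← hps]
        refine Finset.prod_congr rfl fun l _ => ?_
        rw [hFG (f l), Matrix.mul_apply]
        refine Finset.sum_congr rfl fun r _ => ?_
        rw [Matrix.conjTranspose_apply]

lemma reindexPerm (F : Fin 3 → Matrix (Fin n × Fin k) (Fin n × Fin k) ℂ)
    (P : (Fin k → Fin 3) → Prop) [DecidablePred P]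
    (hP : ∀ (σ : Equiv.Perm (Fin k)) f, P (f ∘ σ) ↔ P f) (i j : Fin n) :
    (∑ f : Fin k → Fin 3, if P f then
        (∑ σ : Equiv.Perm (Fin k), ∑ τ : Equiv.Perm (Fin k),
          ((Equiv.Perm.sign σ : ℤ) : ℂ) * ((Equiv.Perm.sign τ : ℤ) : ℂ)
            * ∏ l, F (f l) (i, σ l) (j, τ l)) else 0)
      = (Nat.factorial k : ℂ)
          * ∑ f : Fin k → Fin 3, if P f then (blockF F f i j).det else 0 := by
  have hite : ∀ (c : Prop) [Decidable c] (X : Equiv.Perm (Fin k) → ℂ),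
      (if c then ∑ σ, X σ else 0) = ∑ σ : Equiv.Perm (Fin k), if c then X σ else 0 := by
    intro c _ X
    split <;> simp
  calc (∑ f : Fin k → Fin 3, if P f then
        (∑ σ : Equiv.Perm (Fin k), ∑ τ : Equiv.Perm (Fin k),
          ((Equiv.Perm.sign σ : ℤ) : ℂ) * ((Equiv.Perm.sign τ : ℤ) : ℂ)
            * ∏ l, F (f l) (i, σ l) (j, τ l)) else 0)
      = ∑ σ : Equiv.Perm (Fin k), ∑ f : Fin k → Fin 3, if P f then
          (∑ τ : Equiv.Perm (Fin k),
            ((Equiv.Perm.sign σ : ℤ) : ℂ) * ((Equiv.Perm.sign τ : ℤ) : ℂ)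
              * ∏ l, F (f l) (i, σ l) (j, τ l)) else 0 := by
        rw [Finset.sum_comm]
        refine Finset.sum_congr rfl fun f _ => ?_
        rw [hite]
    _ = ∑ _σ : Equiv.Perm (Fin k),
          ∑ f : Fin k → Fin 3, if P f then (blockF F f i j).det else 0 := by
        refine Finset.sum_congr rfl fun σ _ => ?_
        refine (Fintype.sum_equiv (Equiv.arrowCongr σ.symm (Equiv.refl (Fin 3)))
          _ _ fun f => ?_).symm
        have he : (Equiv.arrowCongr σ.symm (Equiv.refl (Fin 3))) f = f ∘ σ := rfl
        rw [he, if_congr (hP σ f) rfl rfl]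
        by_cases hf : P f
        · simp only [hf, if_true]
          rw [det_col]
          refine Fintype.sum_equiv (Equiv.mulRight σ) _ _ fun π => ?_
          have hτ : ∀ l, (Equiv.mulRight σ π) l = π (σ l) := fun l => rfl
          have hprod : ∏ l, F ((f ∘ σ) l) (i, σ l) (j, (Equiv.mulRight σ π) l)
              = ∏ l, F (f l) (i, l) (j, π l) := by
            rw [← Equiv.prod_comp σ (fun l' => F (f l') (i, l') (j, π l'))]
            exact Finset.prod_congr rfl fun l _ => by rw [hτ]; rfl
          rw [hprod]
          have hs2 : ((Equiv.Perm.sign σ : ℤ) : ℂ) * ((Equiv.Perm.sign σ : ℤ) : ℂ) = 1 := by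
            have h1 : ((Equiv.Perm.sign σ : ℤ)) * ((Equiv.Perm.sign σ : ℤ)) = 1 := by
              rw [← Units.val_mul, Int.units_mul_self]; rfl
            exact_mod_cast h1
          have hsign : ((Equiv.Perm.sign σ : ℤ) : ℂ)
              * ((Equiv.Perm.sign (Equiv.mulRight σ π) : ℤ) : ℂ)
              = ((Equiv.Perm.sign π : ℤ) : ℂ) := by
            have hms : Equiv.mulRight σ π = π * σ := rfl
            rw [hms, Equiv.Perm.sign_mul]
            push_cast
            linear_combination ((Equiv.Perm.sign π : ℤ) : ℂ) * hs2
          rw [hsign]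
          rfl
        · simp [hf]
    _ = (Nat.factorial k : ℂ)
          * ∑ f : Fin k → Fin 3, if P f then (blockF F f i j).det else 0 := by
        rw [Finset.sum_const, Finset.card_univ, Fintype.card_perm, Fintype.card_fin,
          nsmul_eq_mul]

lemma vec_ne0 {α : Type*} (X X' Y Z : α) (v : Fin 3) (hv : v ≠ 0) :
    ![X, Y, Z] v = ![X', Y, Z] v := by
  fin_cases v <;> simp_all

lemma vec_ne1 {α : Type*} (X Y Y' Z : α) (v : Fin 3) (hv : v ≠ 1) :
    ![X, Y, Z] v = ![X, Y', Z] v := by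
  fin_cases v <;> simp_all

/-- The "mixed" predicate. -/
def mixed {k : ℕ} (f : Fin k → Fin 3) : Prop := (∃ l, f l = 0) ∧ (∃ l, f l = 1)

instance {k : ℕ} : DecidablePred (mixed (k := k)) := fun _ => by
  unfold mixed; infer_instance

lemma perF (A B C : Matrix (Fin n × Fin k) (Fin n × Fin k) ℂ) (i j : Fin n)
    (f : Fin k → Fin 3) :
    (blockF ![A, B, C] f i j).det + (blockF ![0, 0, C] f i j).det
      - ((blockF ![A, 0, C] f i j).det + (blockF ![0, B, C] f i j).det)
    = if mixed f then (blockF ![A, B, C] f i j).det else 0 := by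
  by_cases h0 : ∃ l, f l = 0
  · by_cases h1 : ∃ l, f l = 1
    · obtain ⟨l0, hl0⟩ := h0
      obtain ⟨l1, hl1⟩ := h1
      have d1 : (blockF ![0, 0, C] f i j).det = 0 :=
        Matrix.det_eq_zero_of_row_eq_zero l0 (fun m => by simp [blockF, hl0])
      have d2 : (blockF ![A, 0, C] f i j).det = 0 :=
        Matrix.det_eq_zero_of_row_eq_zero l1 (fun m => by simp [blockF, hl1])
      have d3 : (blockF ![0, B, C] f i j).det = 0 :=
        Matrix.det_eq_zero_of_row_eq_zero l0 (fun m => by simp [blockF, hl0])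
      rw [if_pos (show mixed f from ⟨⟨l0, hl0⟩, ⟨l1, hl1⟩⟩), d1, d2, d3]
      ring
    · have e1 : blockF ![A, B, C] f i j = blockF ![A, 0, C] f i j := by
        ext l m
        exact congrFun (congrFun (vec_ne1 A B 0 C (f l) (fun h => h1 ⟨l, h⟩)) (i, l)) (j, m)
      have e2 : blockF ![0, B, C] f i j = blockF ![0, 0, C] f i j := by
        ext l m
        exact congrFun (congrFun (vec_ne1 0 B 0 C (f l) (fun h => h1 ⟨l, h⟩)) (i, l)) (j, m)
      rw [if_neg (fun hc : mixed f => h1 hc.2), e1, e2]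
      ring
  · have e1 : blockF ![A, B, C] f i j = blockF ![0, B, C] f i j := by
      ext l m
      exact congrFun (congrFun (vec_ne0 A 0 B C (f l) (fun h => h0 ⟨l, h⟩)) (i, l)) (j, m)
    have e2 : blockF ![A, 0, C] f i j = blockF ![0, 0, C] f i j := by
      ext l m
      exact congrFun (congrFun (vec_ne0 A 0 0 C (f l) (fun h => h0 ⟨l, h⟩)) (i, l)) (j, m)
    rw [if_neg (fun hc : mixed f => h0 hc.1), e1, e2]
    ring

lemma det2_isHermitian {H : Matrix (Fin n × Fin k) (Fin n × Fin k) ℂ}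
    (hH : H.IsHermitian) : (det2 H).IsHermitian := by
  refine Matrix.ext fun i j => ?_
  rw [Matrix.conjTranspose_apply]
  have hblock : (Matrix.of fun l m : Fin k => H (j, l) (i, m))
      = (Matrix.of fun l m : Fin k => H (i, l) (j, m))ᴴ := by
    ext l m
    rw [Matrix.conjTranspose_apply, Matrix.of_apply, Matrix.of_apply]
    conv_lhs => rw [← hH]
    rw [Matrix.conjTranspose_apply]
  show star ((Matrix.of fun l m : Fin k => H (j, l) (i, m)).det)
      = (Matrix.of fun l m : Fin k => H (i, l) (j, m)).det
  rw [hblock, Matrix.det_conjTranspose, star_star]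

open scoped MatrixOrder in
lemma exists_sqrt' {A : Matrix (Fin n × Fin k) (Fin n × Fin k) ℂ} (hA : A.PosSemidef) :
    ∃ X : Matrix (Fin n × Fin k) (Fin n × Fin k) ℂ, A = Xᴴ * X := by
  refine ⟨CFC.sqrt A, ?_⟩
  have h0 : 0 ≤ A := hA.nonneg
  have hs : IsSelfAdjoint (CFC.sqrt A) := (CFC.sqrt_nonneg A).isSelfAdjoint
  rw [show (CFC.sqrt A)ᴴ = CFC.sqrt A from hs.star_eq, CFC.sqrt_mul_sqrt_self A h0]

noncomputable def psqrt {A : Matrix (Fin n × Fin k) (Fin n × Fin k) ℂ} (hA : A.PosSemidef) :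
    Matrix (Fin n × Fin k) (Fin n × Fin k) ℂ := Classical.choose (exists_sqrt' hA)

lemma psqrt_spec {A : Matrix (Fin n × Fin k) (Fin n × Fin k) ℂ} (hA : A.PosSemidef) :
    A = (psqrt hA)ᴴ * psqrt hA := Classical.choose_spec (exists_sqrt' hA)

end Det2Aux

open Matrix Det2Aux

set_option maxHeartbeats 1000000

/-- For positive semidefinite `A, B, C ∈ M_n(M_k)`,
`det₂(A+B+C) + det₂ C ≥ det₂(A+C) + det₂(B+C)` in the Loewner order on
`M_n`. -/
theorem det2_superadditive_three {n k : ℕ}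
    (A B C : Matrix (Fin n × Fin k) (Fin n × Fin k) ℂ)
    (hA : A.PosSemidef) (hB : B.PosSemidef) (hC : C.PosSemidef) :
    (det2 (A + B + C) + det2 C - (det2 (A + C) + det2 (B + C))).PosSemidef := by
  have hP : ∀ (σ : Equiv.Perm (Fin k)) (f : Fin k → Fin 3), mixed (f ∘ σ) ↔ mixed f := by
    intro σ f
    constructor
    · rintro ⟨⟨l, h0⟩, ⟨l', h1⟩⟩
      exact ⟨⟨σ l, h0⟩, ⟨σ l', h1⟩⟩
    · rintro ⟨⟨l, h0⟩, ⟨l', h1⟩⟩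
      exact ⟨⟨σ.symm l, by simpa using h0⟩, ⟨σ.symm l', by simpa using h1⟩⟩
  -- the matrix D, entrywise
  have hD : ∀ i j, (det2 (A + B + C) + det2 C - (det2 (A + C) + det2 (B + C))) i j
      = ∑ f : Fin k → Fin 3, if mixed f then (blockF ![A, B, C] f i j).det else 0 := by
    intro i j
    have s1 : A + B + C = ∑ t, ![A, B, C] t := by simp [Fin.sum_univ_three]
    have s2 : C = ∑ t, ![(0 : Matrix (Fin n × Fin k) (Fin n × Fin k) ℂ), 0, C] t := by
      simp [Fin.sum_univ_three]
    have s3 : A + C = ∑ t, ![A, 0, C] t := by simp [Fin.sum_univ_three]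
    have s4 : B + C = ∑ t, ![(0 : Matrix (Fin n × Fin k) (Fin n × Fin k) ℂ), B, C] t := by
      simp [Fin.sum_univ_three]
    have e1 : det2 (A + B + C) i j = ∑ f : Fin k → Fin 3, (blockF ![A, B, C] f i j).det := by
      rw [s1]; exact det2_sum_expand _ i j
    have e2 : det2 C i j = ∑ f : Fin k → Fin 3,
        (blockF ![(0 : Matrix (Fin n × Fin k) (Fin n × Fin k) ℂ), 0, C] f i j).det := by
      conv_lhs => rw [s2]
      exact det2_sum_expand _ i j
    have e3 : det2 (A + C) i j = ∑ f : Fin k → Fin 3, (blockF ![A, 0, C] f i j).det := by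
      rw [s3]; exact det2_sum_expand _ i j
    have e4 : det2 (B + C) i j = ∑ f : Fin k → Fin 3,
        (blockF ![(0 : Matrix (Fin n × Fin k) (Fin n × Fin k) ℂ), B, C] f i j).det := by
      rw [s4]; exact det2_sum_expand _ i j
    rw [Matrix.sub_apply, Matrix.add_apply, Matrix.add_apply]
    rw [e1, e2, e3, e4]
    rw [← Finset.sum_add_distrib, ← Finset.sum_add_distrib, ← Finset.sum_sub_distrib]
    exact Finset.sum_congr rfl fun f _ => perF A B C i j f
  -- the Gram factorization
  let G : Fin 3 → Matrix (Fin n × Fin k) (Fin n × Fin k) ℂ := ![psqrt hA, psqrt hB, psqrt hC]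
  have hFG : ∀ t, ![A, B, C] t = (G t)ᴴ * G t := by
    intro t
    fin_cases t
    · show A = (psqrt hA)ᴴ * psqrt hA
      exact psqrt_spec hA
    · show B = (psqrt hB)ᴴ * psqrt hB
      exact psqrt_spec hB
    · show C = (psqrt hC)ᴴ * psqrt hC
      exact psqrt_spec hC
  let W : Matrix ((Fin k → Fin 3) × (Fin k → Fin n × Fin k)) (Fin n) ℂ :=
    Matrix.of fun p i => if mixed p.1 then T G p.1 p.2 i else 0
  have hW : ∀ i j, (Wᴴ * W) i j = (Nat.factorial k : ℂ)
      * (det2 (A + B + C) + det2 C - (det2 (A + C) + det2 (B + C))) i j := by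
    intro i j
    have step1 : (Wᴴ * W) i j
        = ∑ f : Fin k → Fin 3, if mixed f then
            (∑ ρ : Fin k → Fin n × Fin k, star (T G f ρ i) * T G f ρ j) else 0 := by
      rw [Matrix.mul_apply]
      simp only [Matrix.conjTranspose_apply]
      rw [Fintype.sum_prod_type]
      refine Finset.sum_congr rfl fun f _ => ?_
      by_cases hf : mixed f
      · rw [if_pos hf]
        refine Finset.sum_congr rfl fun ρ _ => ?_
        show star (if mixed f then T G f ρ i else 0) * (if mixed f then T G f ρ j else 0) = _
        rw [if_pos hf, if_pos hf]
      · rw [if_neg hf]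
        refine Finset.sum_eq_zero fun ρ _ => ?_
        show star (if mixed f then T G f ρ i else 0) * (if mixed f then T G f ρ j else 0) = 0
        rw [if_neg hf, if_neg hf, star_zero, zero_mul]
    rw [step1]
    have step2 : ∀ f : Fin k → Fin 3,
        (if mixed f then (∑ ρ : Fin k → Fin n × Fin k, star (T G f ρ i) * T G f ρ j) else 0)
        = if mixed f then (∑ σ : Equiv.Perm (Fin k), ∑ τ : Equiv.Perm (Fin k),
            ((Equiv.Perm.sign σ : ℤ) : ℂ) * ((Equiv.Perm.sign τ : ℤ) : ℂ)
              * ∏ l, (![A, B, C]) (f l) (i, σ l) (j, τ l)) else 0 := by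
      intro f
      by_cases hf : mixed f
      · simp only [hf, if_true]
        exact inner_sum ![A, B, C] G hFG f i j
      · simp [hf]
    rw [Finset.sum_congr rfl fun f _ => step2 f, reindexPerm ![A, B, C] mixed hP i j, hD]
  -- conclude
  have hpsd := Matrix.posSemidef_conjTranspose_mul_self W
  refine Matrix.PosSemidef.of_dotProduct_mulVec_nonneg ?_ ?_
  · exact (((det2_isHermitian ((hA.add hB).add hC).1).add (det2_isHermitian hC.1)).sub
      ((det2_isHermitian (hA.add hC).1).add (det2_isHermitian (hB.add hC).1)))
  · intro x
    have h1 := hpsd.dotProduct_mulVec_nonneg x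
    have h2 : dotProduct (star x) ((Wᴴ * W) *ᵥ x)
        = (Nat.factorial k : ℂ)
          * dotProduct (star x)
              ((det2 (A + B + C) + det2 C - (det2 (A + C) + det2 (B + C))) *ᵥ x) := by
      have hWD : Wᴴ * W = (Nat.factorial k : ℂ)
          • (det2 (A + B + C) + det2 C - (det2 (A + C) + det2 (B + C))) := by
        ext i j
        rw [Matrix.smul_apply, hW, smul_eq_mul]
      rw [hWD, Matrix.smul_mulVec, dotProduct_smul, smul_eq_mul]
    rw [h2] at h1
    set z := dotProduct (star x)
        ((det2 (A + B + C) + det2 C - (det2 (A + C) + det2 (B + C))) *ᵥ x) with hz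
    have hk : (0 : ℝ) < (Nat.factorial k : ℝ) := by
      exact_mod_cast Nat.factorial_pos k
    rw [Complex.nonneg_iff] at h1 ⊢
    constructor
    · have := h1.1
      simp only [Complex.mul_re, Complex.natCast_re, Complex.natCast_im] at this
      nlinarith [this, hk]
    · have := h1.2
      simp only [Complex.mul_im, Complex.natCast_re, Complex.natCast_im] at this
      nlinarith [this, hk]
end

section
/- Let A, B, C be positive semidefinite complex matrices of the same size. Then det(A+B+C) + det A + det B + det C ≥ det(A+B) + det(A+C) + det(B+C), as an inequality of nonnegative real numbers. -/
open Matrix Finset Equiv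

namespace DetSuperAux

variable {n : ℕ}

/-- Row-mixed matrix: row `i` is the vector `w (g i)`. -/
noncomputable def mw (w : Fin 3 × Fin n → Fin n → ℂ) (g : Fin n → Fin 3 × Fin n) :
    Matrix (Fin n) (Fin n) ℂ :=
  Matrix.of fun i j => w (g i) j

/-- Term of the multilinear expansion of the determinant associated to `g`. -/
noncomputable def t (w : Fin 3 × Fin n → Fin n → ℂ) (g : Fin n → Fin 3 × Fin n) : ℂ :=
  (∏ i, (starRingEnd ℂ) (w (g i) i)) * (mw w g).det

theorem expand (w : Fin 3 × Fin n → Fin n → ℂ) (S : Finset (Fin 3 × Fin n)) :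
    (Matrix.of fun i j => ∑ p ∈ S, (starRingEnd ℂ) (w p i) * w p j).det
      = ∑ g ∈ Fintype.piFinset (fun _ : Fin n => S), t w g := by
  have hrows : (Matrix.of fun i j => ∑ p ∈ S, (starRingEnd ℂ) (w p i) * w p j)
      = Matrix.of (fun i => ∑ p ∈ S, (starRingEnd ℂ) (w p i) • w p) := by
    ext i j
    simp [Finset.sum_apply]
  rw [hrows]
  have h2 : (Matrix.of (fun i => ∑ p ∈ S, (starRingEnd ℂ) (w p i) • w p)).det
      = (detRowAlternating : (Fin n → ℂ) [⋀^Fin n]→ₗ[ℂ] ℂ)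
          (fun i => ∑ p ∈ S, (starRingEnd ℂ) (w p i) • w p) := rfl
  have h4 : (detRowAlternating : (Fin n → ℂ) [⋀^Fin n]→ₗ[ℂ] ℂ)
        (fun i => ∑ p ∈ S, (starRingEnd ℂ) (w p i) • w p)
      = ∑ g ∈ Fintype.piFinset (fun _ : Fin n => S),
          (detRowAlternating : (Fin n → ℂ) [⋀^Fin n]→ₗ[ℂ] ℂ)
            (fun i => (starRingEnd ℂ) (w (g i) i) • w (g i)) :=
    (detRowAlternating : (Fin n → ℂ) [⋀^Fin n]→ₗ[ℂ] ℂ).toMultilinearMap.map_sum_finset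
      (fun i p => (starRingEnd ℂ) (w p i) • w p) (fun _ => S)
  rw [h2, h4]
  refine Finset.sum_congr rfl fun g _ => ?_
  have h3 := (detRowAlternating : (Fin n → ℂ) [⋀^Fin n]→ₗ[ℂ] ℂ).toMultilinearMap.map_smul_univ
    (fun i => (starRingEnd ℂ) (w (g i) i)) (fun i => w (g i))
  exact h3

theorem symmetrize (w : Fin 3 × Fin n → Fin n → ℂ) (g : Fin n → Fin 3 × Fin n) :
    ∑ σ : Perm (Fin n), t w (g ∘ σ)
      = (starRingEnd ℂ) ((mw w g).det) * (mw w g).det := by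
  have h1 : ∀ σ : Perm (Fin n), mw w (g ∘ σ) = (mw w g).submatrix σ id := fun σ => rfl
  have h2 : ∀ σ : Perm (Fin n),
      t w (g ∘ σ) = ((Perm.sign σ : ℤ) * ∏ i, (starRingEnd ℂ) (w (g (σ i)) i))
        * (mw w g).det := by
    intro σ
    rw [t, h1, det_permute]
    simp only [Function.comp_apply]
    ring
  rw [Finset.sum_congr rfl (fun σ _ => h2 σ), ← Finset.sum_mul]
  congr 1
  have h3 : ∑ σ : Perm (Fin n), ((Perm.sign σ : ℤ) * ∏ i, (starRingEnd ℂ) (w (g (σ i)) i) : ℂ)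
      = ((mw w g).map (starRingEnd ℂ)).det := by
    rw [Matrix.det_apply]
    refine (Finset.sum_congr rfl fun σ _ => ?_).symm
    simp [mw, Units.smul_def, zsmul_eq_mul]
  rw [h3, show ((mw w g).map (starRingEnd ℂ)) = ((mw w g)ᴴ)ᵀ from rfl, Matrix.det_transpose,
    Matrix.det_conjTranspose]
  rfl

theorem orbit_sum_nonneg (w : Fin 3 × Fin n → Fin n → ℂ)
    (G : Finset ((Fin n) → Fin 3 × Fin n))
    (hG : ∀ (g : Fin n → Fin 3 × Fin n) (σ : Perm (Fin n)),
      g ∈ G → g ∘ (σ : Fin n → Fin n) ∈ G) :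
    0 ≤ ∑ g ∈ G, (t w g).re := by
  have hre : ∀ σ : Perm (Fin n), ∑ g ∈ G, (t w g).re = ∑ g ∈ G, (t w (g ∘ σ)).re := by
    intro σ
    refine Finset.sum_nbij' (fun g => g ∘ (σ.symm : Fin n → Fin n))
      (fun g => g ∘ (σ : Fin n → Fin n)) ?_ ?_ ?_ ?_ ?_
    · intro g hg; exact hG g σ.symm hg
    · intro g hg; exact hG g σ hg
    · intro g _; funext i; simp
    · intro g _; funext i; simp
    · intro g _
      have : (g ∘ (σ.symm : Fin n → Fin n)) ∘ (σ : Fin n → Fin n) = g := by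
        funext i; simp [Function.comp]
      rw [this]
  have hcard : 0 < (Fintype.card (Perm (Fin n)) : ℝ) := by
    exact_mod_cast Fintype.card_pos
  rw [← mul_nonneg_iff_of_pos_left (c := (Fintype.card (Perm (Fin n)) : ℝ)) hcard]
  have hs : (Fintype.card (Perm (Fin n)) : ℝ) * ∑ g ∈ G, (t w g).re
      = ∑ σ : Perm (Fin n), ∑ g ∈ G, (t w (g ∘ σ)).re := by
    rw [Finset.sum_congr rfl (fun σ _ => (hre σ).symm), Finset.sum_const, Finset.card_univ,
      nsmul_eq_mul]
  rw [hs, Finset.sum_comm]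
  refine Finset.sum_nonneg fun g _ => ?_
  have hsym := symmetrize w g
  have hre2 : (∑ σ : Perm (Fin n), t w (g ∘ σ)).re
      = ∑ σ : Perm (Fin n), (t w (g ∘ σ)).re := Complex.re_sum _ _
  rw [← hre2, hsym]
  simp only [Complex.mul_re, Complex.conj_re, Complex.conj_im]
  nlinarith [sq_nonneg ((mw w g).det.re), sq_nonneg ((mw w g).det.im)]

end DetSuperAux

open DetSuperAux ComplexOrder

/-- For positive semidefinite complex matrices `A, B, C` of the same size,
`det(A+B+C) + det A + det B + det C ≥ det(A+B) + det(A+C) + det(B+C)`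
(all determinants are nonnegative reals, compared via their real parts). -/
theorem det_three_term_superadditive {n : ℕ}
    (A B C : Matrix (Fin n) (Fin n) ℂ)
    (hA : A.PosSemidef) (hB : B.PosSemidef) (hC : C.PosSemidef) :
    (A + B + C).det.re + A.det.re + B.det.re + C.det.re ≥
      (A + B).det.re + (A + C).det.re + (B + C).det.re := by
  rcases Nat.eq_zero_or_pos n with hn | hn
  · subst hn
    simp [Matrix.det_fin_zero]
  obtain ⟨X, hX⟩ : ∃ X : Matrix (Fin n) (Fin n) ℂ, A = Xᴴ * X := by
    open scoped MatrixOrder in exact CStarAlgebra.nonneg_iff_eq_star_mul_self.mp hA.nonneg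
  obtain ⟨Y, hY⟩ : ∃ X : Matrix (Fin n) (Fin n) ℂ, B = Xᴴ * X := by
    open scoped MatrixOrder in exact CStarAlgebra.nonneg_iff_eq_star_mul_self.mp hB.nonneg
  obtain ⟨Z, hZ⟩ : ∃ X : Matrix (Fin n) (Fin n) ℂ, C = Xᴴ * X := by
    open scoped MatrixOrder in exact CStarAlgebra.nonneg_iff_eq_star_mul_self.mp hC.nonneg
  set w : Fin 3 × Fin n → Fin n → ℂ := fun p => ![X, Y, Z] p.1 p.2 with hw
  have key : ∀ T : Finset (Fin 3),
      (∑ b ∈ T, ![A, B, C] b) =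
        Matrix.of fun i j => ∑ p ∈ T ×ˢ (univ : Finset (Fin n)),
          (starRingEnd ℂ) (w p i) * w p j := by
    intro T
    ext i j
    rw [Matrix.of_apply, Finset.sum_product]
    rw [Matrix.sum_apply]
    refine Finset.sum_congr rfl fun b _ => ?_
    rcases (by decide : ∀ x : Fin 3, x = 0 ∨ x = 1 ∨ x = 2) b with rfl | rfl | rfl
    · rw [show (![A, B, C] (0 : Fin 3) : Matrix (Fin n) (Fin n) ℂ) = A from rfl, hX]
      simp [Matrix.mul_apply, Matrix.conjTranspose_apply, hw]
    · rw [show (![A, B, C] (1 : Fin 3) : Matrix (Fin n) (Fin n) ℂ) = B from rfl, hY]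
      simp [Matrix.mul_apply, Matrix.conjTranspose_apply, hw]
    · rw [show (![A, B, C] (2 : Fin 3) : Matrix (Fin n) (Fin n) ℂ) = C from rfl, hZ]
      simp [Matrix.mul_apply, Matrix.conjTranspose_apply, hw]
  have hPT : ∀ T : Finset (Fin 3),
      (Fintype.piFinset fun _ : Fin n => T ×ˢ (univ : Finset (Fin n)))
        = univ.filter (fun g : Fin n → Fin 3 × Fin n => ∀ i, (g i).1 ∈ T) := by
    intro T; ext g; simp [Fintype.mem_piFinset]
  have dre : ∀ T : Finset (Fin 3),
      (∑ b ∈ T, ![A, B, C] b).det.re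
        = ∑ g : Fin n → Fin 3 × Fin n, if (∀ i, (g i).1 ∈ T) then (t w g).re else 0 := by
    intro T
    rw [key T, expand w, hPT, Complex.re_sum, Finset.sum_filter]
  have sumUniv : (∑ b ∈ (univ : Finset (Fin 3)), ![A, B, C] b) = A + B + C := by
    rw [Fin.sum_univ_three]; rfl
  have sum01 : (∑ b ∈ ({0, 1} : Finset (Fin 3)), ![A, B, C] b) = A + B := by
    rw [Finset.sum_pair (by decide)]; rfl
  have sum02 : (∑ b ∈ ({0, 2} : Finset (Fin 3)), ![A, B, C] b) = A + C := by
    rw [Finset.sum_pair (by decide)]; rfl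
  have sum12 : (∑ b ∈ ({1, 2} : Finset (Fin 3)), ![A, B, C] b) = B + C := by
    rw [Finset.sum_pair (by decide)]; rfl
  have sum0 : (∑ b ∈ ({0} : Finset (Fin 3)), ![A, B, C] b) = A := by
    rw [Finset.sum_singleton]; rfl
  have sum1 : (∑ b ∈ ({1} : Finset (Fin 3)), ![A, B, C] b) = B := by
    rw [Finset.sum_singleton]; rfl
  have sum2 : (∑ b ∈ ({2} : Finset (Fin 3)), ![A, B, C] b) = C := by
    rw [Finset.sum_singleton]; rfl
  rw [ge_iff_le, ← sub_nonneg]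
  have hrw : (A + B + C).det.re + A.det.re + B.det.re + C.det.re -
      ((A + B).det.re + (A + C).det.re + (B + C).det.re)
      = ∑ g : Fin n → Fin 3 × Fin n,
          ((if (∀ i, (g i).1 ∈ (univ : Finset (Fin 3))) then (t w g).re else 0)
          + (if (∀ i, (g i).1 ∈ ({0} : Finset (Fin 3))) then (t w g).re else 0)
          + (if (∀ i, (g i).1 ∈ ({1} : Finset (Fin 3))) then (t w g).re else 0)
          + (if (∀ i, (g i).1 ∈ ({2} : Finset (Fin 3))) then (t w g).re else 0)
          - (if (∀ i, (g i).1 ∈ ({0, 1} : Finset (Fin 3))) then (t w g).re else 0)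
          - (if (∀ i, (g i).1 ∈ ({0, 2} : Finset (Fin 3))) then (t w g).re else 0)
          - (if (∀ i, (g i).1 ∈ ({1, 2} : Finset (Fin 3))) then (t w g).re else 0)) := by
    have dABC : (A + B + C).det.re = _ := sumUniv ▸ dre univ
    have dAB : (A + B).det.re = _ := sum01 ▸ dre {0, 1}
    have dAC : (A + C).det.re = _ := sum02 ▸ dre {0, 2}
    have dBC : (B + C).det.re = _ := sum12 ▸ dre {1, 2}
    have dA : A.det.re = _ := sum0 ▸ dre {0}
    have dB : B.det.re = _ := sum1 ▸ dre {1}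
    have dC : C.det.re = _ := sum2 ▸ dre {2}
    rw [dABC, dAB, dAC, dBC, dA, dB, dC]
    simp only [Finset.sum_sub_distrib, Finset.sum_add_distrib]
    ring
  rw [hrw]
  have hpt : ∀ g : Fin n → Fin 3 × Fin n,
      ((if (∀ i, (g i).1 ∈ (univ : Finset (Fin 3))) then (t w g).re else 0)
          + (if (∀ i, (g i).1 ∈ ({0} : Finset (Fin 3))) then (t w g).re else 0)
          + (if (∀ i, (g i).1 ∈ ({1} : Finset (Fin 3))) then (t w g).re else 0)
          + (if (∀ i, (g i).1 ∈ ({2} : Finset (Fin 3))) then (t w g).re else 0)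
          - (if (∀ i, (g i).1 ∈ ({0, 1} : Finset (Fin 3))) then (t w g).re else 0)
          - (if (∀ i, (g i).1 ∈ ({0, 2} : Finset (Fin 3))) then (t w g).re else 0)
          - (if (∀ i, (g i).1 ∈ ({1, 2} : Finset (Fin 3))) then (t w g).re else 0))
      = if (∀ b : Fin 3, ∃ i, (g i).1 = b) then (t w g).re else 0 := by
    intro g
    have hx : ∀ x : Fin 3, x = 0 ∨ x = 1 ∨ x = 2 := by decide
    have mem01 : ∀ x : Fin 3, x ∈ ({0, 1} : Finset (Fin 3)) ↔ x ≠ 2 := by decide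
    have mem02 : ∀ x : Fin 3, x ∈ ({0, 2} : Finset (Fin 3)) ↔ x ≠ 1 := by decide
    have mem12 : ∀ x : Fin 3, x ∈ ({1, 2} : Finset (Fin 3)) ↔ x ≠ 0 := by decide
    have mem0 : ∀ x : Fin 3, x ∈ ({0} : Finset (Fin 3)) ↔ (x ≠ 1 ∧ x ≠ 2) := by decide
    have mem1 : ∀ x : Fin 3, x ∈ ({1} : Finset (Fin 3)) ↔ (x ≠ 0 ∧ x ≠ 2) := by decide
    have mem2 : ∀ x : Fin 3, x ∈ ({2} : Finset (Fin 3)) ↔ (x ≠ 0 ∧ x ≠ 1) := by decide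
    simp only [Finset.mem_univ, mem01, mem02, mem12, mem0, mem1, mem2, forall_and,
      forall_const, if_true]
    by_cases q0 : ∀ i, (g i).1 ≠ 0 <;> by_cases q1 : ∀ i, (g i).1 ≠ 1 <;>
      by_cases q2 : ∀ i, (g i).1 ≠ 2
    · exfalso
      rcases hx (g ⟨0, hn⟩).1 with h | h | h
      · exact q0 _ h
      · exact q1 _ h
      · exact q2 _ h
    · have hGn : ¬∀ b : Fin 3, ∃ i, (g i).1 = b := fun h => (h 0).elim fun i hi => q0 i hi
      simp [q0, q1, q2, hGn] <;> ring
    · have hGn : ¬∀ b : Fin 3, ∃ i, (g i).1 = b := fun h => (h 0).elim fun i hi => q0 i hi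
      simp [q0, q1, q2, hGn] <;> ring
    · have hGn : ¬∀ b : Fin 3, ∃ i, (g i).1 = b := fun h => (h 0).elim fun i hi => q0 i hi
      simp [q0, q1, q2, hGn] <;> ring
    · have hGn : ¬∀ b : Fin 3, ∃ i, (g i).1 = b := fun h => (h 1).elim fun i hi => q1 i hi
      simp [q0, q1, q2, hGn] <;> ring
    · have hGn : ¬∀ b : Fin 3, ∃ i, (g i).1 = b := fun h => (h 1).elim fun i hi => q1 i hi
      simp [q0, q1, q2, hGn] <;> ring
    · have hGn : ¬∀ b : Fin 3, ∃ i, (g i).1 = b := fun h => (h 2).elim fun i hi => q2 i hi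
      simp [q0, q1, q2, hGn] <;> ring
    · have nq0 := q0
      have nq1 := q1
      have nq2 := q2
      push_neg at nq0 nq1 nq2
      have hG : ∀ b : Fin 3, ∃ i, (g i).1 = b := by
        intro b
        rcases hx b with rfl | rfl | rfl
        · exact nq0
        · exact nq1
        · exact nq2
      simp [q0, q1, q2, hG] <;> ring
  rw [Finset.sum_congr rfl (fun g _ => hpt g), ← Finset.sum_filter]
  refine orbit_sum_nonneg w _ ?_
  intro g σ hg
  simp only [Finset.mem_filter, Finset.mem_univ, true_and] at hg ⊢
  intro b
  obtain ⟨i, hi⟩ := hg b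
  exact ⟨σ.symm i, by simp [Function.comp, hi]⟩
end

section
/- Let A, B, C be positive semidefinite complex matrices of the same size. Then det(A+B+C) + det C ≥ det(A+C) + det(B+C), as an inequality of nonnegative real numbers. -/
open ComplexOrder

open Matrix Finset Equiv Complex

section PsdSqrt
open scoped MatrixOrder

noncomputable def Matrix.PosSemidef.sqrt {m : Type*} [Fintype m] [DecidableEq m]
    {A : Matrix m m ℂ} (_hA : A.PosSemidef) : Matrix m m ℂ := CFC.sqrt A

lemma Matrix.PosSemidef.posSemidef_sqrt {m : Type*} [Fintype m] [DecidableEq m]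
    {A : Matrix m m ℂ} (hA : A.PosSemidef) : hA.sqrt.PosSemidef :=
  (CFC.sqrt_nonneg A).posSemidef

lemma Matrix.PosSemidef.sqrt_mul_self {m : Type*} [Fintype m] [DecidableEq m]
    {A : Matrix m m ℂ} (hA : A.PosSemidef) : hA.sqrt * hA.sqrt = A :=
  CFC.sqrt_mul_sqrt_self A hA.nonneg

end PsdSqrt

private lemma cb_key {n : ℕ} {κ : Type*} [Fintype κ] [DecidableEq κ]
    (u : κ → Fin n → ℂ) (w : κ → ℂ) :
    (Nat.factorial n : ℂ) * (Matrix.of fun i j => ∑ m, w m * (u m i * starRingEnd ℂ (u m j))).det =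
      ∑ f : Fin n → κ, (∏ i, w (f i)) *
        ((Matrix.of fun i j => u (f i) j).det *
          starRingEnd ℂ (Matrix.of fun i j => u (f i) j).det) := by
  classical
  set D : (Fin n → κ) → ℂ := fun f => (Matrix.of fun i j => u (f i) j).det with hD
  -- Step 1: multilinear expansion over rows
  have expand :
      (Matrix.of fun i j => ∑ m, w m * (u m i * starRingEnd ℂ (u m j))).det
        = ∑ f : Fin n → κ, (∏ i, (w (f i) * u (f i) i)) *
            (Matrix.of fun i j => starRingEnd ℂ (u (f i) j)).det := by
    have h := MultilinearMap.map_sum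
      (f := (Matrix.detRowAlternating : (Fin n → ℂ) [⋀^Fin n]→ₗ[ℂ] ℂ).toMultilinearMap)
      (g := fun (i : Fin n) (m : κ) => (w m * u m i) • fun j => starRingEnd ℂ (u m j))
    have hl : (Matrix.of fun i j => ∑ m, w m * (u m i * starRingEnd ℂ (u m j)))
        = fun i => ∑ m, (w m * u m i) • fun j => starRingEnd ℂ (u m j) := by
      funext i j
      simp [Finset.sum_apply, mul_assoc]
    rw [show (Matrix.of fun i j => ∑ m, w m * (u m i * starRingEnd ℂ (u m j))).det
        = Matrix.detRowAlternating (fun i => ∑ m, (w m * u m i) • fun j => starRingEnd ℂ (u m j)) from by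
          rw [← hl]; rfl]
    erw [h]
    refine Finset.sum_congr rfl fun f _ => ?_
    have := MultilinearMap.map_smul_univ
      (f := (Matrix.detRowAlternating : (Fin n → ℂ) [⋀^Fin n]→ₗ[ℂ] ℂ).toMultilinearMap)
      (fun i => w (f i) * u (f i) i) (fun i => fun j => starRingEnd ℂ (u (f i) j))
    simp [smul_eq_mul] at this
    exact this
  rw [expand]
  -- conj of D
  have hconj : ∀ f : Fin n → κ,
      (Matrix.of fun i j => starRingEnd ℂ (u (f i) j)).det = starRingEnd ℂ (D f) := by
    intro f
    rw [hD]
    rw [RingHom.map_det]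
    rfl
  simp only [hconj]
  set c : (Fin n → κ) → ℂ :=
    fun f => (∏ i, (w (f i) * u (f i) i)) * starRingEnd ℂ (D f) with hc
  have hcard : (Nat.factorial n : ℂ) = (Fintype.card (Equiv.Perm (Fin n)) : ℂ) := by
    rw [Fintype.card_perm, Fintype.card_fin]
  have hsym : ∀ σ : Equiv.Perm (Fin n),
      (∑ f : Fin n → κ, c f) = ∑ f : Fin n → κ, c (f ∘ σ) := by
    intro σ
    exact (Equiv.sum_comp (Equiv.arrowCongr σ.symm (Equiv.refl κ)) c).symm
  calc (Nat.factorial n : ℂ) * ∑ f : Fin n → κ, c f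
      = ∑ _σ : Equiv.Perm (Fin n), ∑ f : Fin n → κ, c f := by
        rw [Finset.sum_const, hcard, ← Finset.card_univ, nsmul_eq_mul]
    _ = ∑ σ : Equiv.Perm (Fin n), ∑ f : Fin n → κ, c (f ∘ σ) :=
        Finset.sum_congr rfl fun σ _ => hsym σ
    _ = ∑ f : Fin n → κ, ∑ σ : Equiv.Perm (Fin n), c (f ∘ σ) := Finset.sum_comm
    _ = ∑ f : Fin n → κ, (∏ i, w (f i)) * (D f * starRingEnd ℂ (D f)) := by
        refine Finset.sum_congr rfl fun f _ => ?_
        have hperm : ∀ σ : Equiv.Perm (Fin n), c (f ∘ σ)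
            = (((Equiv.Perm.sign σ : ℤ) : ℂ) * ∏ i, u (f (σ i)) i) *
                ((∏ i, w (f i)) * starRingEnd ℂ (D f)) := by
          intro σ
          have h1 : (∏ i, (w ((f ∘ σ) i) * u ((f ∘ σ) i) i))
              = (∏ i, w (f i)) * ∏ i, u (f (σ i)) i := by
            rw [Finset.prod_mul_distrib]
            congr 1
            exact Equiv.prod_comp σ (fun m => w (f m))
          have h2 : D (f ∘ σ) = ((Equiv.Perm.sign σ : ℤ) : ℂ) * D f := by
            have hsub : (Matrix.of fun i j => u (f (σ i)) j)
                = (Matrix.of fun i j => u (f i) j).submatrix σ id := rfl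
            show (Matrix.of fun i j => u ((f ∘ σ) i) j).det = _
            rw [show (Matrix.of fun i j => u ((f ∘ σ) i) j)
                = (Matrix.of fun i j => u (f i) j).submatrix σ id from rfl,
              Matrix.det_permute]
          have h3 : starRingEnd ℂ (D (f ∘ σ))
              = ((Equiv.Perm.sign σ : ℤ) : ℂ) * starRingEnd ℂ (D f) := by
            rw [h2]
            simp
          rw [hc]
          show (∏ i, (w ((f ∘ σ) i) * u ((f ∘ σ) i) i)) * starRingEnd ℂ (D (f ∘ σ)) = _
          rw [h1, h3]
          ring
        have h4 : (∑ σ : Equiv.Perm (Fin n),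
            ((Equiv.Perm.sign σ : ℤ) : ℂ) * ∏ i, u (f (σ i)) i) = D f :=
          (Matrix.det_apply' (Matrix.of fun i j => u (f i) j)).symm
        rw [Finset.sum_congr rfl fun σ _ => hperm σ, ← Finset.sum_mul, h4]
        ring

/-- For positive semidefinite complex matrices `A, B, C` of the same size,
`det(A+B+C) + det C ≥ det(A+C) + det(B+C)` (all determinants are nonnegative
reals, compared via their real parts). -/
theorem det_superadditive_three {n : ℕ}
    (A B C : Matrix (Fin n) (Fin n) ℂ)
    (hA : A.PosSemidef) (hB : B.PosSemidef) (hC : C.PosSemidef) :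
    (A + B + C).det.re + C.det.re ≥ (A + C).det.re + (B + C).det.re := by
  classical
  set u : (Fin n ⊕ (Fin n ⊕ Fin n)) → Fin n → ℂ := Sum.elim (fun m i => hA.sqrt i m)
    (Sum.elim (fun m i => hB.sqrt i m) (fun m i => hC.sqrt i m)) with hu
  have hgram : ∀ (M : Matrix (Fin n) (Fin n) ℂ) (hM : M.PosSemidef) (i j : Fin n),
      (∑ m, hM.sqrt i m * starRingEnd ℂ (hM.sqrt j m)) = M i j := by
    intro M hM i j
    have hH : ∀ a b : Fin n, starRingEnd ℂ (hM.sqrt a b) = hM.sqrt b a := by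
      intro a b
      have h := hM.posSemidef_sqrt.isHermitian
      calc starRingEnd ℂ (hM.sqrt a b) = hM.sqrtᴴ b a := rfl
        _ = hM.sqrt b a := by rw [h]
    calc (∑ m, hM.sqrt i m * starRingEnd ℂ (hM.sqrt j m))
        = ∑ m, hM.sqrt i m * hM.sqrt m j := by simp only [hH]
      _ = (hM.sqrt * hM.sqrt) i j := (Matrix.mul_apply).symm
      _ = M i j := by rw [hM.sqrt_mul_self]
  -- generic representation
  have repgen : ∀ (a b c : ℝ) (i j : Fin n), (∑ m : Fin n ⊕ (Fin n ⊕ Fin n),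
      ((Sum.elim (fun _ => a) (Sum.elim (fun _ => b) (fun _ => c)) m : ℝ) : ℂ) *
        (u m i * starRingEnd ℂ (u m j)))
      = (a : ℂ) * A i j + (b : ℂ) * B i j + (c : ℂ) * C i j := by
    intro a b c i j
    rw [Fintype.sum_sum_type, Fintype.sum_sum_type]
    simp only [Sum.elim_inl, Sum.elim_inr, hu]
    rw [← Finset.mul_sum, ← Finset.mul_sum, ← Finset.mul_sum,
      hgram A hA i j, hgram B hB i j, hgram C hC i j]
    ring
  have main : ∀ (a b c : ℝ) (M : Matrix (Fin n) (Fin n) ℂ),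
      (∀ i j, (a : ℂ) * A i j + (b : ℂ) * B i j + (c : ℂ) * C i j = M i j) →
      (Nat.factorial n : ℝ) * M.det.re =
        ∑ f : Fin n → (Fin n ⊕ (Fin n ⊕ Fin n)),
          (∏ i, Sum.elim (fun _ => a) (Sum.elim (fun _ => b) (fun _ => c)) (f i)) *
            Complex.normSq (Matrix.of fun i j => u (f i) j).det := by
    intro a b c M hM
    have hMe : M = Matrix.of fun i j => ∑ m,
        ((Sum.elim (fun _ => a) (Sum.elim (fun _ => b) (fun _ => c)) m : ℝ) : ℂ) *
          (u m i * starRingEnd ℂ (u m j)) := by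
      ext i j
      rw [Matrix.of_apply, repgen a b c i j, hM i j]
    have hkey := cb_key u
      (fun m => ((Sum.elim (fun _ => a) (Sum.elim (fun _ => b) (fun _ => c)) m : ℝ) : ℂ))
    calc (Nat.factorial n : ℝ) * M.det.re = ((Nat.factorial n : ℂ) * M.det).re := by
          simp [Complex.mul_re]
      _ = _ := by
          rw [hMe, hkey, Complex.re_sum]
          refine Finset.sum_congr rfl fun f _ => ?_
          rw [Complex.mul_conj, ← Complex.ofReal_prod, ← Complex.ofReal_mul,
            Complex.ofReal_re]
  have E1 := main 1 1 1 (A + B + C) (by intro i j; simp [Matrix.add_apply])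
  have E2 := main 0 0 1 C (by intro i j; simp)
  have E3 := main 1 0 1 (A + C) (by intro i j; simp [Matrix.add_apply])
  have E4 := main 0 1 1 (B + C) (by intro i j; simp [Matrix.add_apply])
  have hfact : (0 : ℝ) < (Nat.factorial n : ℝ) := by positivity
  rw [ge_iff_le, ← mul_le_mul_iff_right₀ hfact, mul_add, mul_add, E1, E2, E3, E4,
    ← Finset.sum_add_distrib, ← Finset.sum_add_distrib]
  refine Finset.sum_le_sum fun f _ => ?_
  set N : ℝ := Complex.normSq (Matrix.of fun i j => u (f i) j).det with hN
  have hNpos : 0 ≤ N := Complex.normSq_nonneg _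
  set pAC : ℝ := ∏ i, Sum.elim (fun _ => (1:ℝ)) (Sum.elim (fun _ => 0) (fun _ => 1)) (f i) with hpAC
  set pBC : ℝ := ∏ i, Sum.elim (fun _ => (0:ℝ)) (Sum.elim (fun _ => 1) (fun _ => 1)) (f i) with hpBC
  set pC : ℝ := ∏ i, Sum.elim (fun _ => (0:ℝ)) (Sum.elim (fun _ => 0) (fun _ => 1)) (f i) with hpC
  have hp1 : (∏ i, Sum.elim (fun _ => (1:ℝ)) (Sum.elim (fun _ => 1) (fun _ => 1)) (f i)) = 1 := by
    refine Finset.prod_eq_one fun i _ => ?_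
    rcases f i with m | m | m <;> rfl
  have hmul : pAC * pBC = pC := by
    rw [hpAC, hpBC, hpC, ← Finset.prod_mul_distrib]
    refine Finset.prod_congr rfl fun i _ => ?_
    rcases f i with m | m | m <;> norm_num
  have h01 : ∀ i : Fin n,
      (0 ≤ Sum.elim (fun _ => (1:ℝ)) (Sum.elim (fun _ => 0) (fun _ => 1)) (f i) ∧
        Sum.elim (fun _ => (1:ℝ)) (Sum.elim (fun _ => 0) (fun _ => 1)) (f i) ≤ 1) ∧
      (0 ≤ Sum.elim (fun _ => (0:ℝ)) (Sum.elim (fun _ => 1) (fun _ => 1)) (f i) ∧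
        Sum.elim (fun _ => (0:ℝ)) (Sum.elim (fun _ => 1) (fun _ => 1)) (f i) ≤ 1) := by
    intro i
    rcases f i with m | m | m <;> norm_num
  have hAC0 : 0 ≤ pAC := Finset.prod_nonneg fun i _ => ((h01 i).1).1
  have hAC1 : pAC ≤ 1 := Finset.prod_le_one (fun i _ => ((h01 i).1).1) (fun i _ => ((h01 i).1).2)
  have hBC0 : 0 ≤ pBC := Finset.prod_nonneg fun i _ => ((h01 i).2).1
  have hBC1 : pBC ≤ 1 := Finset.prod_le_one (fun i _ => ((h01 i).2).1) (fun i _ => ((h01 i).2).2)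
  rw [hp1]
  nlinarith [mul_nonneg (mul_nonneg (sub_nonneg.2 hAC1) (sub_nonneg.2 hBC1)) hNpos]
end
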